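/- arXiv:2007.11765 — 4 statements merged into one kernel-verified Lean document; each statement's English description precedes it below -/
import Mathlib

section
/- Let p_k ≥ 0, h_k > 0 for k in a finite nonempty set K with S := ∑_k √(p_k)·h_k > 0, and c > 0. Then the minimum value of the MSE G(η) = ∑_k (√(p_k)·h_k/√η − 1)² + c/η over η > 0 equals |K| − S²/(∑_k p_k·h_k² + c). -/
open Finset

theorem stmt2 {ι : Type*} (K : Finset ι) (hK : K.Nonempty)
    (p h : ι → ℝ) (hp : ∀ k ∈ K, 0 ≤ p k) (hh : ∀ k ∈ K, 0 < h k)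
    (c : ℝ) (hc : 0 < c)
    (S : ℝ) (hS : S = ∑ k ∈ K, Real.sqrt (p k) * h k) (hSpos : 0 < S)
    (G : ℝ → ℝ)
    (hG : ∀ η, G η = (∑ k ∈ K, (Real.sqrt (p k) * h k / Real.sqrt η - 1) ^ 2) + c / η) :
    ∃ η : ℝ, 0 < η ∧ (∀ η' : ℝ, 0 < η' → G η ≤ G η') ∧
      G η = (K.card : ℝ) - S ^ 2 / ((∑ k ∈ K, p k * h k ^ 2) + c) := by
  set Q : ℝ := (∑ k ∈ K, p k * h k ^ 2) + c with hQdef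
  have hsum0 : 0 ≤ ∑ k ∈ K, p k * h k ^ 2 :=
    Finset.sum_nonneg fun k hk => mul_nonneg (hp k hk) (sq_nonneg _)
  have hQ0 : 0 < Q := by positivity
  have key : ∀ η : ℝ, 0 < η →
      G η = Q * (1 / Real.sqrt η) ^ 2 - 2 * S * (1 / Real.sqrt η) + K.card := by
    intro η hη
    have hsη : 0 < Real.sqrt η := Real.sqrt_pos.mpr hη
    have hsq : Real.sqrt η ^ 2 = η := Real.sq_sqrt hη.le
    rw [hG]
    have expand : ∀ k ∈ K, (Real.sqrt (p k) * h k / Real.sqrt η - 1) ^ 2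
        = p k * h k ^ 2 * (1 / Real.sqrt η) ^ 2
          - 2 * (Real.sqrt (p k) * h k) * (1 / Real.sqrt η) + 1 := by
      intro k hk
      have hpk : Real.sqrt (p k) ^ 2 = p k := Real.sq_sqrt (hp k hk)
      have : (Real.sqrt (p k) * h k / Real.sqrt η - 1) ^ 2
          = Real.sqrt (p k) ^ 2 * h k ^ 2 * (1 / Real.sqrt η) ^ 2
            - 2 * (Real.sqrt (p k) * h k) * (1 / Real.sqrt η) + 1 := by
        ring
      rw [this, hpk]
    rw [Finset.sum_congr rfl expand]
    rw [Finset.sum_add_distrib, Finset.sum_sub_distrib, Finset.sum_const,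
      ← Finset.sum_mul, ← Finset.sum_mul, ← Finset.mul_sum, ← hS]
    have hcη : c / η = c * (1 / Real.sqrt η) ^ 2 := by
      rw [div_eq_mul_inv]
      congr 1
      rw [one_div, inv_pow, hsq]
    rw [hcη]
    push_cast
    ring
  refine ⟨(Q / S) ^ 2, by positivity, ?_, ?_⟩
  · intro η' hη'
    have hsQS : Real.sqrt ((Q / S) ^ 2) = Q / S :=
      Real.sqrt_sq (by positivity)
    have h1 : G ((Q / S) ^ 2) = (K.card : ℝ) - S ^ 2 / Q := by
      rw [key _ (by positivity), hsQS]
      field_simp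
      ring
    rw [h1, key _ hη']
    set t : ℝ := 1 / Real.sqrt η'
    have h2 : Q * t ^ 2 - 2 * S * t + S ^ 2 / Q = (Q * t - S) ^ 2 / Q := by
      field_simp
      ring
    have h3 : 0 ≤ (Q * t - S) ^ 2 / Q := by positivity
    linarith
  · have hsQS : Real.sqrt ((Q / S) ^ 2) = Q / S :=
      Real.sqrt_sq (by positivity)
    rw [key _ (by positivity), hsQS]
    field_simp
    ring
end

section
/- Consider L cells with disjoint device sets K_ℓ. Suppose the power vector (p̃_k)_{k∈K} with p̃_k ∈ [0, P̄_k] and denoising factors (η̃_ℓ) achieve a Pareto-optimal MSE tuple (Φ₁,…,Φ_L), where Φ_ℓ = ∑_{k∈K_ℓ}(√(p̃_k)h_k/√(η̃_ℓ) − 1)² + (σ² + ∑_{j≠ℓ} ∑_{i∈K_j} p̃_i ĝ_{i,ℓ}²)/η̃_ℓ, and Pareto optimality means no other feasible (p, η) achieves MSE ≤ Φ_ℓ in every cell with strict inequality in some cell. Define IT levels Γ_{ℓ,j} = ∑_{k∈K_ℓ} p̃_k ĝ_{k,j}² for all ℓ ≠ j. Then for each cell ℓ, the pair ((p̃_k)_{k∈K_ℓ},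 η̃_ℓ) is an optimal solution of the single-cell problem: minimize ∑_{k∈K_ℓ}(√(p_k)h_k/√η − 1)² + (σ² + ∑_{j≠ℓ} Γ_{j,ℓ})/η subject to ∑_{k∈K_ℓ} p_k ĝ_{k,j}² ≤ Γ_{ℓ,j} for all j ≠ ℓ and 0 ≤ p_k ≤ P̄_k; and its optimal value equals Φ_ℓ. -/
/-!
Suppose a feasible single-cell solution `(p, η)` for cell `ℓ` beat `(p̃, η̃_ℓ)`. Splice it into the
Pareto point: use `p` on `K_ℓ`, `p̃` elsewhere, and `η` as the denoising factor of cell `ℓ`. Cell `ℓ`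
receives exactly the interference it received before, so its MSE becomes the single-cell objective of
`(p, η)`, which is strictly smaller than `Φ_ℓ`. Every other cell `m` keeps its own devices and
denoising factor, and the interference it receives from cell `ℓ` is at most `Γ_{ℓ,m}`, its old value,
so its MSE does not grow. The spliced profile would dominate the Pareto point.
-/

open Finset

section CellMSE

variable {ι κ : Type*}

noncomputable def cellMSE (K : Finset κ) (h : κ → ℝ) (σ2 : ℝ) (p : κ → ℝ) (η interference : ℝ) :
    ℝ :=
  ∑ k ∈ K, (Real.sqrt (p k) * h k / Real.sqrt η - 1) ^ 2 + (σ2 + interference) / η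

def interference [DecidableEq ι] (L : Finset ι) (Kc : ι → Finset κ) (g : κ → ι → ℝ)
    (p : κ → ℝ) (m : ι) : ℝ :=
  ∑ j ∈ L.erase m, ∑ i ∈ Kc j, p i * g i m ^ 2

variable {K : Finset κ} {h : κ → ℝ} {σ2 η I J : ℝ} {p q : κ → ℝ}

theorem cellMSE_congr_power (hpq : ∀ k ∈ K, p k = q k) :
    cellMSE K h σ2 p η I = cellMSE K h σ2 q η I := by
  unfold cellMSE
  rw [sum_congr rfl fun k hk => by rw [hpq k hk]]

theorem cellMSE_mono_interference (hη : 0 ≤ η) (hIJ : I ≤ J) :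
    cellMSE K h σ2 p η I ≤ cellMSE K h σ2 p η J := by
  unfold cellMSE
  gcongr

end CellMSE

section Splice

variable {ι κ : Type*} [DecidableEq ι] [DecidableEq κ] {L : Finset ι} {Kc : ι → Finset κ}
  {g : κ → ι → ℝ} {p q : κ → ℝ} {ℓ m : ι}

theorem interference_piecewise_self (hdisj : (L : Set ι).PairwiseDisjoint Kc) (hℓ : ℓ ∈ L) :
    interference L Kc g ((Kc ℓ).piecewise p q) ℓ = interference L Kc g q ℓ := by
  refine sum_congr rfl fun j hj => sum_congr rfl fun i hi => ?_
  have hdisj_jℓ := hdisj (mem_of_mem_erase hj) hℓ (ne_of_mem_erase hj)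
  rw [piecewise_eq_of_notMem _ _ _ (disjoint_left.mp hdisj_jℓ hi)]

theorem interference_piecewise_le (hdisj : (L : Set ι).PairwiseDisjoint Kc) (hℓ : ℓ ∈ L)
    (hle : ∑ k ∈ Kc ℓ, p k * g k m ^ 2 ≤ ∑ k ∈ Kc ℓ, q k * g k m ^ 2) :
    interference L Kc g ((Kc ℓ).piecewise p q) m ≤ interference L Kc g q m := by
  refine sum_le_sum fun j hj => ?_
  rcases eq_or_ne j ℓ with rfl | hjℓ
  · rwa [sum_congr rfl fun i hi => by rw [piecewise_eq_of_mem _ _ _ hi]]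
  · have hdisj_jℓ := hdisj (mem_of_mem_erase hj) hℓ hjℓ
    exact (sum_congr rfl fun i hi =>
      by rw [piecewise_eq_of_notMem _ _ _ (disjoint_left.mp hdisj_jℓ hi)]).le

end Splice

theorem stmt12_general {ι κ : Type*} [DecidableEq ι] (L : Finset ι)
    (Kc : ι → Finset κ)
    (hdisj : ∀ ℓ ∈ L, ∀ j ∈ L, ℓ ≠ j → Disjoint (Kc ℓ) (Kc j))
    (h : κ → ℝ)
    (g : κ → ι → ℝ) (σ2 : ℝ)
    (Pb : κ → ℝ)
    (pt : κ → ℝ) (hpt : ∀ k, 0 ≤ pt k ∧ pt k ≤ Pb k)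
    (ηt : ι → ℝ) (hηt : ∀ ℓ ∈ L, 0 < ηt ℓ)
    (MSE : ι → (κ → ℝ) → ℝ → ℝ)
    (hMSE : ∀ ℓ ∈ L, ∀ p η,
      MSE ℓ p η = (∑ k ∈ Kc ℓ, (Real.sqrt (p k) * h k / Real.sqrt η - 1) ^ 2) +
        (σ2 + ∑ j ∈ L.erase ℓ, ∑ i ∈ Kc j, p i * (g i ℓ) ^ 2) / η)
    (hPareto : ¬ ∃ (p : κ → ℝ) (η : ι → ℝ),
      (∀ k, 0 ≤ p k ∧ p k ≤ Pb k) ∧ (∀ ℓ ∈ L, 0 < η ℓ) ∧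
      (∀ ℓ ∈ L, MSE ℓ p (η ℓ) ≤ MSE ℓ pt (ηt ℓ)) ∧
      (∃ ℓ ∈ L, MSE ℓ p (η ℓ) < MSE ℓ pt (ηt ℓ)))
    (Γ : ι → ι → ℝ) (hΓ : ∀ ℓ j, Γ ℓ j = ∑ k ∈ Kc ℓ, pt k * (g k j) ^ 2)
    (SC : ι → (κ → ℝ) → ℝ → ℝ)
    (hSC : ∀ ℓ ∈ L, ∀ p η,
      SC ℓ p η = (∑ k ∈ Kc ℓ, (Real.sqrt (p k) * h k / Real.sqrt η - 1) ^ 2) +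
        (σ2 + ∑ j ∈ L.erase ℓ, Γ j ℓ) / η) :
    ∀ ℓ ∈ L,
      (SC ℓ pt (ηt ℓ) = MSE ℓ pt (ηt ℓ)) ∧
      (∀ j ∈ L.erase ℓ, ∑ k ∈ Kc ℓ, pt k * (g k j) ^ 2 ≤ Γ ℓ j) ∧
      (∀ (p : κ → ℝ) (η : ℝ), 0 < η →
        (∀ k ∈ Kc ℓ, 0 ≤ p k ∧ p k ≤ Pb k) →
        (∀ j ∈ L.erase ℓ, ∑ k ∈ Kc ℓ, p k * (g k j) ^ 2 ≤ Γ ℓ j) →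
        SC ℓ pt (ηt ℓ) ≤ SC ℓ p η) := by
  classical
  intro ℓ hℓ
  have hΓ_sum : ∑ j ∈ L.erase ℓ, Γ j ℓ = interference L Kc g pt ℓ := by simp only [hΓ]; rfl
  have hSC_pt : SC ℓ pt (ηt ℓ) = MSE ℓ pt (ηt ℓ) := by rw [hSC ℓ hℓ, hMSE ℓ hℓ, hΓ_sum]; rfl
  refine ⟨hSC_pt, fun j _ => (hΓ ℓ j).ge, fun p η hη hp hIT => ?_⟩
  by_contra! hlt
  set p' := (Kc ℓ).piecewise p pt
  have hself : MSE ℓ p' η = SC ℓ p η := by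
    rw [hMSE ℓ hℓ, hSC ℓ hℓ, hΓ_sum, ← interference_piecewise_self (p := p) hdisj hℓ]
    exact cellMSE_congr_power fun k hk => piecewise_eq_of_mem _ _ _ hk
  have hother : ∀ m ∈ L, m ≠ ℓ → MSE m p' (ηt m) ≤ MSE m pt (ηt m) := fun m hm hmℓ => by
    rw [hMSE m hm, hMSE m hm]
    refine (cellMSE_congr_power fun k hk => piecewise_eq_of_notMem _ _ _ ?_).trans_le
      (cellMSE_mono_interference (hηt m hm).le (interference_piecewise_le hdisj hℓ ?_))
    · exact disjoint_left.mp (hdisj m hm ℓ hℓ hmℓ) hk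
    · exact (hIT m (mem_erase.mpr ⟨hmℓ, hm⟩)).trans_eq (hΓ ℓ m)
  refine hPareto ⟨p', Function.update ηt ℓ η, fun k => ?_, fun m hm => ?_, fun m hm => ?_, ℓ, hℓ, ?_⟩
  · by_cases hk : k ∈ Kc ℓ
    · simpa [p', hk] using hp k hk
    · simpa [p', hk] using hpt k
  · rw [Function.update_apply]; split_ifs; exacts [hη, hηt m hm]
  · rcases eq_or_ne m ℓ with rfl | hmℓ
    · simpa [hself, hSC_pt] using hlt.le
    · simpa [hmℓ] using hother m hm hmℓ
  · simpa [hself, hSC_pt] using hlt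

theorem stmt12 {ι κ : Type*} [DecidableEq ι] (L : Finset ι) (hL : L.Nonempty)
    (Kc : ι → Finset κ)
    (hdisj : ∀ ℓ ∈ L, ∀ j ∈ L, ℓ ≠ j → Disjoint (Kc ℓ) (Kc j))
    (h : κ → ℝ) (hh : ∀ k, 0 < h k)
    (g : κ → ι → ℝ) (σ2 : ℝ) (hσ : 0 < σ2)
    (Pb : κ → ℝ) (hPb : ∀ k, 0 < Pb k)
    (pt : κ → ℝ) (hpt : ∀ k, 0 ≤ pt k ∧ pt k ≤ Pb k)
    (ηt : ι → ℝ) (hηt : ∀ ℓ ∈ L, 0 < ηt ℓ)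
    (MSE : ι → (κ → ℝ) → ℝ → ℝ)
    (hMSE : ∀ ℓ ∈ L, ∀ p η,
      MSE ℓ p η = (∑ k ∈ Kc ℓ, (Real.sqrt (p k) * h k / Real.sqrt η - 1) ^ 2) +
        (σ2 + ∑ j ∈ L.erase ℓ, ∑ i ∈ Kc j, p i * (g i ℓ) ^ 2) / η)
    (hPareto : ¬ ∃ (p : κ → ℝ) (η : ι → ℝ),
      (∀ k, 0 ≤ p k ∧ p k ≤ Pb k) ∧ (∀ ℓ ∈ L, 0 < η ℓ) ∧
      (∀ ℓ ∈ L, MSE ℓ p (η ℓ) ≤ MSE ℓ pt (ηt ℓ)) ∧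
      (∃ ℓ ∈ L, MSE ℓ p (η ℓ) < MSE ℓ pt (ηt ℓ)))
    (Γ : ι → ι → ℝ) (hΓ : ∀ ℓ j, Γ ℓ j = ∑ k ∈ Kc ℓ, pt k * (g k j) ^ 2)
    (SC : ι → (κ → ℝ) → ℝ → ℝ)
    (hSC : ∀ ℓ ∈ L, ∀ p η,
      SC ℓ p η = (∑ k ∈ Kc ℓ, (Real.sqrt (p k) * h k / Real.sqrt η - 1) ^ 2) +
        (σ2 + ∑ j ∈ L.erase ℓ, Γ j ℓ) / η) :
    ∀ ℓ ∈ L,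
      (SC ℓ pt (ηt ℓ) = MSE ℓ pt (ηt ℓ)) ∧
      (∀ j ∈ L.erase ℓ, ∑ k ∈ Kc ℓ, pt k * (g k j) ^ 2 ≤ Γ ℓ j) ∧
      (∀ (p : κ → ℝ) (η : ℝ), 0 < η →
        (∀ k ∈ Kc ℓ, 0 ≤ p k ∧ p k ≤ Pb k) →
        (∀ j ∈ L.erase ℓ, ∑ k ∈ Kc ℓ, p k * (g k j) ^ 2 ≤ Γ ℓ j) →
        SC ℓ pt (ηt ℓ) ≤ SC ℓ p η) :=
  stmt12_general L Kc hdisj h g σ2 Pb pt hpt ηt hηt MSE hMSE hPareto Γ hΓ SC hSC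
end

section
/- Let Φ̄_ℓ : (0,∞)^{2(L−1)} → ℝ (ℓ = 1,…,L) be differentiable functions of the IT-level vectors, and suppose for some pair (ℓ, j) the 2×2 Jacobian matrix D_{ℓ,j} = [[∂Φ̄_ℓ/∂Γ_{ℓ,j}, ∂Φ̄_ℓ/∂Γ_{j,ℓ}], [∂Φ̄_j/∂Γ_{ℓ,j}, ∂Φ̄_j/∂Γ_{j,ℓ}]] satisfies det(D_{ℓ,j}) ≠ 0. Then there exists a direction d ∈ ℝ² with D_{ℓ,j}·d < 0 componentwise, and hence for sufficiently small δ > 0 the update (Γ_{ℓ,j}, Γ_{j,ℓ}) + δ·d strictly decreases both Φ̄_ℓ and Φ̄_j to first order. Consequently, at any IT-level vector whose induced MSE tuple is Pareto optimal (assuming MSEs in other cells are non-increasing under the update), det(D_{ℓ,j}) = 0 for every pair ℓ ≠ j. -/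
/-!
If `det D ≠ 0`, the Jacobian `D` of `(f, g)` is invertible, so some direction `v` solves
`D v = (-1, -1)`: both directional derivatives are negative. Moving a little along `v` then
strictly decreases `f` and `g` together, which no Pareto optimal point allows.
-/

open Filter Topology

theorem HasDerivAt.eventually_lt_of_neg {φ : ℝ → ℝ} {φ' t₀ : ℝ} (h : HasDerivAt φ φ' t₀)
    (hneg : φ' < 0) : ∀ᶠ t in 𝓝[>] t₀, φ t < φ t₀ := by
  have hslope : ∀ᶠ t in 𝓝[>] t₀, slope φ t₀ t < 0 :=
    ((hasDerivAt_iff_tendsto_slope.mp h).mono_left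
      (nhdsWithin_mono _ fun _ ht => ne_of_gt ht)).eventually_lt_const hneg
  filter_upwards [hslope, self_mem_nhdsWithin] with t hst (ht : t₀ < t)
  rw [slope_def_field, div_neg_iff] at hst
  rcases hst with ⟨_, hlt⟩ | ⟨hlt, _⟩
  · linarith
  · linarith

theorem HasFDerivAt.eventually_lt_of_apply_neg {E : Type*} [NormedAddCommGroup E]
    [NormedSpace ℝ E] {f : E → ℝ} {f' : E →L[ℝ] ℝ} {x v : E} (hf : HasFDerivAt f f' x)
    (hv : f' v < 0) : ∀ᶠ t in 𝓝[>] (0 : ℝ), f (x + t • v) < f x := by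
  have hline : HasDerivAt (fun t : ℝ => x + t • v) v 0 := by
    simpa using ((hasDerivAt_id (0 : ℝ)).smul_const v).const_add x
  have hcomp : HasDerivAt (fun t : ℝ => f (x + t • v)) (f' v) 0 :=
    (by simpa using hf : HasFDerivAt f f' (x + (0 : ℝ) • v)).comp_hasDerivAt 0 hline
  simpa using hcomp.eventually_lt_of_neg hv

theorem ContinuousLinearMap.apply_prod_eq (L : ℝ × ℝ →L[ℝ] ℝ) (p q : ℝ) :
    L (p, q) = p * L (1, 0) + q * L (0, 1) := by
  have hpq : ((p, q) : ℝ × ℝ) = p • ((1 : ℝ), (0 : ℝ)) + q • ((0 : ℝ), (1 : ℝ)) := by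
    simp
  rw [hpq, map_add, map_smul, map_smul, smul_eq_mul, smul_eq_mul]

theorem exists_apply_neg_apply_neg_of_det_ne_zero (L M : ℝ × ℝ →L[ℝ] ℝ)
    (hdet : L (1, 0) * M (0, 1) - L (0, 1) * M (1, 0) ≠ 0) :
    ∃ v : ℝ × ℝ, L v < 0 ∧ M v < 0 := by
  set a := L (1, 0)
  set b := L (0, 1)
  set c := M (1, 0)
  set d := M (0, 1)
  -- Cramer's rule for `[[a, b], [c, d]] v = (-1, -1)`
  refine ⟨((b - d) / (a * d - b * c), (c - a) / (a * d - b * c)), ?_, ?_⟩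
  · rw [L.apply_prod_eq]
    have hv : (b - d) / (a * d - b * c) * a + (c - a) / (a * d - b * c) * b = -1 := by
      rw [div_mul_eq_mul_div, div_mul_eq_mul_div, ← add_div, div_eq_iff hdet]
      ring
    linarith
  · rw [M.apply_prod_eq]
    have hv : (b - d) / (a * d - b * c) * c + (c - a) / (a * d - b * c) * d = -1 := by
      rw [div_mul_eq_mul_div, div_mul_eq_mul_div, ← add_div, div_eq_iff hdet]
      ring
    linarith

theorem stmt14 (f g : ℝ × ℝ → ℝ) (x : ℝ × ℝ)
    (f' g' : ℝ × ℝ →L[ℝ] ℝ)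
    (hf : HasFDerivAt f f' x) (hg : HasFDerivAt g g' x)
    (a b c d : ℝ)
    (ha : a = f' (1, 0)) (hb : b = f' (0, 1))
    (hc : c = g' (1, 0)) (hd : d = g' (0, 1)) :
    (a * d - b * c ≠ 0 → ∃ v : ℝ × ℝ, f' v < 0 ∧ g' v < 0) ∧
    ((¬ ∃ y : ℝ × ℝ, f y ≤ f x ∧ g y ≤ g x ∧ (f y < f x ∨ g y < g x)) →
      a * d - b * c = 0) := by
  subst ha hb hc hd
  have descent := exists_apply_neg_apply_neg_of_det_ne_zero f' g'
  refine ⟨descent, fun hpareto => ?_⟩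
  by_contra hdet
  obtain ⟨v, hfv, hgv⟩ := descent hdet
  obtain ⟨t, hft, hgt⟩ :=
    ((hf.eventually_lt_of_apply_neg hfv).and (hg.eventually_lt_of_apply_neg hgv)).exists
  exact hpareto ⟨x + t • v, hft.le, hgt.le, Or.inl hft⟩
end

section
/- For a single-cell AirComp system with devices k = 1,…,K (K ≥ 1), channel gains h_k > 0, power budgets P̄_k > 0, noise-plus-interference power C > 0, and no interference constraints (all dual variables λ = 0), the optimal power control minimizing M(p) = K − (∑_k √(p_k) h_k)²/(∑_k p_k h_k² + C) over p ∈ ∏[0, P̄_k] has a threshold structure: there is a threshold η* > 0 such that p_k* = P̄_k whenever P̄_k h_k² ≤ η* (i.e. B_k := P̄_k h_k² below threshold: full power) and p_k* = η*/h_k² whenever P̄_k h_k² > η* (channel inversion), where with devices sorted so that B₁ ≤ … ≤ B_K and k* the optimal split index, η* = ((∑_{i=1}^{k*} h_i² P̄_i + C)/(∑_{i=1}^{k*} h_i √(P̄_i)))². -/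
open Finset


lemma stmt16_core {K : ℕ} (hK : 1 ≤ K) (b : Fin K → ℝ) (hb : ∀ i, 0 < b i)
    {C t : ℝ} (hC : 0 < C) (ht : 0 < t)
    (hfix : t * ∑ i ∈ Finset.univ.filter (fun i => b i ≤ t), b i
      = (∑ i ∈ Finset.univ.filter (fun i => b i ≤ t), b i ^ 2) + C)
    (x : Fin K → ℝ) (hx0 : ∀ i, 0 ≤ x i) (hxb : ∀ i, x i ≤ b i) :
    (∑ i, x i) ^ 2 / ((∑ i, x i ^ 2) + C)
      ≤ (∑ i, min (b i) t) ^ 2 / ((∑ i, min (b i) t ^ 2) + C) := by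
  classical
  have : Nonempty (Fin K) := ⟨⟨0, hK⟩⟩
  set m : Fin K → ℝ := fun i => min (b i) t with hm
  have hmpos : ∀ i, 0 < m i := fun i => lt_min (hb i) ht
  set T := Finset.univ.filter (fun i => b i ≤ t) with hT
  have hmemT : ∀ i : Fin K, i ∈ T ↔ b i ≤ t := by intro i; simp [hT]
  have hmT : ∀ i ∈ T, m i = b i := fun i hi => min_eq_left ((hmemT i).1 hi)
  have hmTc : ∀ i ∈ Tᶜ, m i = t := by
    intro i hi
    have : ¬ b i ≤ t := by simpa [hT] using (Finset.mem_compl.1 hi)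
    exact min_eq_right (le_of_lt (not_le.1 this))
  -- key identity : (∑ m) * t = ∑ m² + C
  have hQ : (∑ i, m i) * t = (∑ i, m i ^ 2) + C := by
    have e1 : ∑ i ∈ T, m i * t = (∑ i ∈ T, m i ^ 2) + C := by
      calc ∑ i ∈ T, m i * t = t * ∑ i ∈ T, b i := by
            rw [Finset.mul_sum]
            exact Finset.sum_congr rfl (fun i hi => by rw [hmT i hi]; ring)
        _ = (∑ i ∈ T, b i ^ 2) + C := hfix
        _ = (∑ i ∈ T, m i ^ 2) + C := by
            congr 1
            exact Finset.sum_congr rfl (fun i hi => by rw [hmT i hi])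
    have e2 : ∑ i ∈ Tᶜ, m i * t = ∑ i ∈ Tᶜ, m i ^ 2 :=
      Finset.sum_congr rfl (fun i hi => by rw [hmTc i hi]; ring)
    have e3 := Finset.sum_add_sum_compl T (fun i => m i * t)
    have e4 := Finset.sum_add_sum_compl T (fun i => m i ^ 2)
    rw [Finset.sum_mul]
    rw [← e3, ← e4, e1, e2]; ring
  have hSm : 0 < ∑ i, m i :=
    Finset.sum_pos (fun i _ => hmpos i) Finset.univ_nonempty
  have hDx : 0 < (∑ i, x i ^ 2) + C := by positivity
  have hDm : 0 < (∑ i, m i ^ 2) + C := by positivity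
  -- Cauchy-Schwarz (Sedrakyan)
  have hCS : (∑ i, x i) ^ 2 / (∑ i, m i) ≤ ∑ i, x i ^ 2 / m i :=
    Finset.sq_sum_div_le_sum_sq_div _ x (fun i _ => hmpos i)
  have hCS' : (∑ i, x i) ^ 2 ≤ (∑ i, x i ^ 2 / m i) * (∑ i, m i) :=
    (div_le_iff₀ hSm).1 hCS
  -- step 2
  have hstep : ∑ i, x i ^ 2 / m i ≤ ((∑ i, x i ^ 2) + C) / t := by
    have key : ∀ i ∈ T, x i ^ 2 / m i ≤ x i ^ 2 / t + (b i - b i ^ 2 / t) := by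
      intro i hi
      have hbt := (hmemT i).1 hi
      have hbi := hb i
      have hx2 : x i ^ 2 ≤ b i ^ 2 := pow_le_pow_left₀ (hx0 i) (hxb i) 2
      rw [hmT i hi]
      have e : x i ^ 2 / t + (b i - b i ^ 2 / t) - x i ^ 2 / b i
          = (b i ^ 2 - x i ^ 2) * (t - b i) / (b i * t) := by
        field_simp
        ring
      have hnn : 0 ≤ (b i ^ 2 - x i ^ 2) * (t - b i) / (b i * t) :=
        div_nonneg (mul_nonneg (by linarith) (by linarith)) (by positivity)
      linarith [e ▸ hnn]
    have hTsum : ∑ i ∈ T, (b i - b i ^ 2 / t) = C / t := by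
      rw [Finset.sum_sub_distrib, ← Finset.sum_div]
      field_simp
      linarith [hfix]
    have h1 : ∑ i ∈ T, x i ^ 2 / m i ≤ (∑ i ∈ T, x i ^ 2 / t) + C / t := by
      calc ∑ i ∈ T, x i ^ 2 / m i ≤ ∑ i ∈ T, (x i ^ 2 / t + (b i - b i ^ 2 / t)) :=
            Finset.sum_le_sum key
        _ = (∑ i ∈ T, x i ^ 2 / t) + C / t := by rw [Finset.sum_add_distrib, hTsum]
    have h2 : ∑ i ∈ Tᶜ, x i ^ 2 / m i = ∑ i ∈ Tᶜ, x i ^ 2 / t :=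
      Finset.sum_congr rfl (fun i hi => by rw [hmTc i hi])
    have e3 := Finset.sum_add_sum_compl T (fun i => x i ^ 2 / m i)
    have e4 := Finset.sum_add_sum_compl T (fun i => x i ^ 2 / t)
    have : ∑ i, x i ^ 2 / m i ≤ (∑ i, x i ^ 2 / t) + C / t := by
      rw [← e3, ← e4]; linarith
    calc ∑ i, x i ^ 2 / m i ≤ (∑ i, x i ^ 2 / t) + C / t := this
      _ = ((∑ i, x i ^ 2) + C) / t := by rw [← Finset.sum_div, add_div]
  -- combine
  rw [div_le_div_iff₀ hDx hDm]
  have hfin : (∑ i, x i) ^ 2 ≤ (((∑ i, x i ^ 2) + C) / t) * (∑ i, m i) :=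
    hCS'.trans (mul_le_mul_of_nonneg_right hstep hSm.le)
  calc (∑ i, x i) ^ 2 * ((∑ i, m i ^ 2) + C)
      = (∑ i, x i) ^ 2 * ((∑ i, m i) * t) := by rw [hQ]
    _ ≤ ((((∑ i, x i ^ 2) + C) / t) * (∑ i, m i)) * ((∑ i, m i) * t) := by
        exact mul_le_mul_of_nonneg_right hfin (by positivity)
    _ = (∑ i, m i) ^ 2 * ((∑ i, x i ^ 2) + C) := by
        field_simp


noncomputable def stmt16_tk {K : ℕ} (b : Fin K → ℝ) (C : ℝ) (k : ℕ) : ℝ :=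
  ((∑ i ∈ Finset.univ.filter (fun i : Fin K => (i : ℕ) < k), b i ^ 2) + C) /
    (∑ i ∈ Finset.univ.filter (fun i : Fin K => (i : ℕ) < k), b i)

lemma stmt16_split {K : ℕ} (hK : 1 ≤ K) (b : Fin K → ℝ) (hb : ∀ i, 0 < b i)
    (hmono : Monotone b) {C : ℝ} (hC : 0 < C) :
    ∃ k, 1 ≤ k ∧ k ≤ K ∧
      (∀ i : Fin K, (i : ℕ) < k → b i ≤ stmt16_tk b C k) ∧
      (∀ i : Fin K, k ≤ (i : ℕ) → stmt16_tk b C k < b i) := by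
  classical
  have hDpos : ∀ k, 1 ≤ k →
      0 < ∑ i ∈ Finset.univ.filter (fun i : Fin K => (i : ℕ) < k), b i := by
    intro k hk
    refine Finset.sum_pos (fun i _ => hb i) ⟨⟨0, hK⟩, ?_⟩
    simp only [Finset.mem_filter, Finset.mem_univ, true_and]
    omega
  have hNpos : ∀ k, 0 < (∑ i ∈ Finset.univ.filter (fun i : Fin K => (i : ℕ) < k), b i ^ 2) + C :=
    fun k => add_pos_of_nonneg_of_pos (Finset.sum_nonneg (fun i _ => sq_nonneg _)) hC
  have htpos : ∀ k, 1 ≤ k → 0 < stmt16_tk b C k :=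
    fun k hk => div_pos (hNpos k) (hDpos k hk)
  set P : ℕ → Prop := fun k => 1 ≤ k ∧ k ≤ K ∧
    ∀ i : Fin K, (i : ℕ) < k → b i ≤ stmt16_tk b C k with hPdef
  have hP1 : P 1 := by
    refine ⟨le_refl 1, hK, ?_⟩
    intro i hi
    have hi0 : i = ⟨0, hK⟩ := by
      have : (i : ℕ) = 0 := by omega
      exact Fin.ext (by simpa using this)
    have hsingle : Finset.univ.filter (fun j : Fin K => (j : ℕ) < 1) = {(⟨0, hK⟩ : Fin K)} := by
      ext j
      simp only [Finset.mem_filter, Finset.mem_univ, true_and, Finset.mem_singleton]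
      constructor
      · intro hj
        exact Fin.ext (by simpa using Nat.lt_one_iff.1 hj)
      · intro hj; rw [hj]; exact Nat.lt_one_iff.2 rfl
    rw [hi0]
    unfold stmt16_tk
    rw [hsingle, Finset.sum_singleton, Finset.sum_singleton]
    rw [le_div_iff₀ (hb _)]
    nlinarith [hb (⟨0, hK⟩ : Fin K)]
  -- step: if b_k ≤ tk k then P (k+1)
  have hstep : ∀ k, 1 ≤ k → ∀ hkK : k < K, b ⟨k, hkK⟩ ≤ stmt16_tk b C k → P (k + 1) := by
    intro k hk hkK hbk
    have hins : Finset.univ.filter (fun i : Fin K => (i : ℕ) < k + 1)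
        = insert (⟨k, hkK⟩ : Fin K) (Finset.univ.filter (fun i : Fin K => (i : ℕ) < k)) := by
      ext j
      simp only [Finset.mem_filter, Finset.mem_univ, true_and, Finset.mem_insert, Fin.ext_iff]
      omega
    have hnm : (⟨k, hkK⟩ : Fin K) ∉ Finset.univ.filter (fun i : Fin K => (i : ℕ) < k) := by
      simp
    set D := ∑ i ∈ Finset.univ.filter (fun i : Fin K => (i : ℕ) < k), b i with hD
    set N := (∑ i ∈ Finset.univ.filter (fun i : Fin K => (i : ℕ) < k), b i ^ 2) + C with hN
    have hDp : 0 < D := hDpos k hk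
    have hNk : b ⟨k, hkK⟩ * D ≤ N := by
      have := hbk
      unfold stmt16_tk at this
      rw [← hD, ← hN] at this
      exact (le_div_iff₀ hDp).1 this
    have htk1 : b ⟨k, hkK⟩ ≤ stmt16_tk b C (k + 1) := by
      unfold stmt16_tk
      rw [hins, Finset.sum_insert hnm, Finset.sum_insert hnm]
      rw [le_div_iff₀ (by nlinarith [hb (⟨k, hkK⟩ : Fin K)])]
      nlinarith [hNk, hN, hD]
    refine ⟨by omega, by omega, ?_⟩
    intro i hi
    have : b i ≤ b ⟨k, hkK⟩ := hmono (by simp only [Fin.le_def]; omega)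
    exact this.trans htk1
  set kstar := Nat.findGreatest P K with hks
  have hPk : P kstar := Nat.findGreatest_spec hK hP1
  have hk1 : 1 ≤ kstar := Nat.le_findGreatest hK hP1
  refine ⟨kstar, hk1, hPk.2.1, hPk.2.2, ?_⟩
  intro i hi
  by_contra hcon
  push_neg at hcon
  have hkK : kstar < K := lt_of_le_of_lt hi i.isLt
  have hbk : b ⟨kstar, hkK⟩ ≤ stmt16_tk b C kstar :=
    le_trans (hmono (by simp only [Fin.le_def]; omega)) hcon
  have := Nat.findGreatest_is_greatest (Nat.lt_succ_self kstar) (by omega)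
  exact this (hstep kstar hk1 hkK hbk)

theorem stmt16 (K : ℕ) (hK : 1 ≤ K) (h Pb : Fin K → ℝ)
    (hh : ∀ i, 0 < h i) (hP : ∀ i, 0 < Pb i) (C : ℝ) (hC : 0 < C)
    (hsort : Monotone fun i : Fin K => Pb i * h i ^ 2)
    (M : (Fin K → ℝ) → ℝ)
    (hM : ∀ p, M p = (K : ℝ) -
      (∑ i, Real.sqrt (p i) * h i) ^ 2 / ((∑ i, p i * h i ^ 2) + C)) :
    ∃ kstar : ℕ, 1 ≤ kstar ∧ kstar ≤ K ∧
    ∃ ηstar : ℝ,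
      ηstar = (((∑ i ∈ Finset.univ.filter fun i : Fin K => (i : ℕ) < kstar,
                    h i ^ 2 * Pb i) + C) /
               (∑ i ∈ Finset.univ.filter fun i : Fin K => (i : ℕ) < kstar,
                    h i * Real.sqrt (Pb i))) ^ 2 ∧
      0 < ηstar ∧
      ∀ p : Fin K → ℝ, (∀ i, 0 ≤ p i ∧ p i ≤ Pb i) →
        M (fun i => if Pb i * h i ^ 2 ≤ ηstar then Pb i else ηstar / h i ^ 2) ≤ M p := by
  classical
  set b : Fin K → ℝ := fun i => h i * Real.sqrt (Pb i) with hbdef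
  have hb : ∀ i, 0 < b i := fun i => mul_pos (hh i) (Real.sqrt_pos.2 (hP i))
  have hbsq : ∀ i, b i ^ 2 = Pb i * h i ^ 2 := by
    intro i
    simp only [hbdef, mul_pow, Real.sq_sqrt (hP i).le]
    ring
  have hbrepr : ∀ i, b i = Real.sqrt (Pb i * h i ^ 2) := by
    intro i
    rw [Real.sqrt_mul (hP i).le, Real.sqrt_sq (hh i).le]
    simp only [hbdef]; ring
  have hbmono : Monotone b := by
    intro i j hij
    rw [hbrepr i, hbrepr j]
    exact Real.sqrt_le_sqrt (hsort hij)
  obtain ⟨kstar, hk1, hkK, hleft, hright⟩ := stmt16_split hK b hb hbmono hC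
  set t := stmt16_tk b C kstar with htdef
  have hDpos : 0 < ∑ i ∈ Finset.univ.filter (fun i : Fin K => (i : ℕ) < kstar), b i := by
    refine Finset.sum_pos (fun i _ => hb i) ⟨⟨0, hK⟩, ?_⟩
    simp only [Finset.mem_filter, Finset.mem_univ, true_and]
    omega
  have htpos : 0 < t := by
    rw [htdef]
    exact div_pos (add_pos_of_nonneg_of_pos (Finset.sum_nonneg fun i _ => sq_nonneg _) hC) hDpos
  refine ⟨kstar, hk1, hkK, t ^ 2, ?_, pow_pos htpos 2, ?_⟩
  · rw [htdef]
    unfold stmt16_tk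
    congr 2
    exact congrArg (fun s => s + C)
      (Finset.sum_congr rfl fun i _ => by rw [hbsq i]; ring)
  · -- the key iff
    have hiff : ∀ i : Fin K, (Pb i * h i ^ 2 ≤ t ^ 2 ↔ b i ≤ t) := by
      intro i
      rw [← hbsq i]
      exact pow_le_pow_iff_left₀ (hb i).le htpos.le (by norm_num)
    have hiff2 : ∀ i : Fin K, ((i : ℕ) < kstar ↔ b i ≤ t) := by
      intro i
      constructor
      · exact hleft i
      · intro hle
        by_contra hcon
        exact absurd hle (not_le.2 (hright i (by omega)))
    -- fixed point over T = filter (b i ≤ t)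
    have hTeq : (Finset.univ.filter (fun i : Fin K => b i ≤ t))
        = Finset.univ.filter (fun i : Fin K => (i : ℕ) < kstar) := by
      apply Finset.filter_congr
      intro i _
      exact (hiff2 i).symm
    have hfix : t * ∑ i ∈ Finset.univ.filter (fun i => b i ≤ t), b i
        = (∑ i ∈ Finset.univ.filter (fun i => b i ≤ t), b i ^ 2) + C := by
      rw [hTeq, htdef]
      unfold stmt16_tk
      rw [div_mul_cancel₀ _ hDpos.ne']
    intro p hp
    set pstar : Fin K → ℝ := fun i => if Pb i * h i ^ 2 ≤ t ^ 2 then Pb i else t ^ 2 / h i ^ 2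
      with hpstar
    have hxstar : ∀ i, Real.sqrt (pstar i) * h i = min (b i) t := by
      intro i
      show Real.sqrt (if Pb i * h i ^ 2 ≤ t ^ 2 then Pb i else t ^ 2 / h i ^ 2) * h i
        = min (b i) t
      by_cases hcase : Pb i * h i ^ 2 ≤ t ^ 2
      · rw [if_pos hcase, min_eq_left ((hiff i).1 hcase), hbdef]
        ring
      · rw [if_neg hcase,
          min_eq_right (le_of_lt (not_le.1 fun hle => hcase ((hiff i).2 hle)))]
        have e : t ^ 2 / h i ^ 2 = (t / h i) ^ 2 := by rw [div_pow]
        rw [e, Real.sqrt_sq (div_nonneg htpos.le (hh i).le),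
          div_mul_cancel₀ _ (hh i).ne']
    have hx2star : ∀ i, pstar i * h i ^ 2 = (min (b i) t) ^ 2 := by
      intro i
      show (if Pb i * h i ^ 2 ≤ t ^ 2 then Pb i else t ^ 2 / h i ^ 2) * h i ^ 2
        = min (b i) t ^ 2
      by_cases hcase : Pb i * h i ^ 2 ≤ t ^ 2
      · rw [if_pos hcase, min_eq_left ((hiff i).1 hcase), hbsq i]
      · rw [if_neg hcase, min_eq_right (le_of_lt (not_le.1 fun hle => hcase ((hiff i).2 hle)))]
        rw [div_mul_cancel₀ _ (pow_ne_zero 2 (hh i).ne')]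
    -- x from p
    set x : Fin K → ℝ := fun i => Real.sqrt (p i) * h i with hx
    have hx0 : ∀ i, 0 ≤ x i := fun i => mul_nonneg (Real.sqrt_nonneg _) (hh i).le
    have hxb : ∀ i, x i ≤ b i := by
      intro i
      simp only [hx, hbdef]
      rw [mul_comm (h i)]
      exact mul_le_mul_of_nonneg_right (Real.sqrt_le_sqrt (hp i).2) (hh i).le
    have hx2 : ∀ i, x i ^ 2 = p i * h i ^ 2 := by
      intro i
      simp only [hx, mul_pow, Real.sq_sqrt (hp i).1]
    have hcore := stmt16_core hK b hb hC htpos hfix x hx0 hxb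
    rw [hM, hM]
    apply sub_le_sub_left
    calc (∑ i, Real.sqrt (p i) * h i) ^ 2 / ((∑ i, p i * h i ^ 2) + C)
        = (∑ i, x i) ^ 2 / ((∑ i, x i ^ 2) + C) := by
          rw [Finset.sum_congr rfl fun i _ => (hx2 i)]
      _ ≤ (∑ i, min (b i) t) ^ 2 / ((∑ i, min (b i) t ^ 2) + C) := hcore
      _ = (∑ i, Real.sqrt (pstar i) * h i) ^ 2 / ((∑ i, pstar i * h i ^ 2) + C) := by
          rw [Finset.sum_congr rfl fun i _ => (hxstar i).symm,
            Finset.sum_congr rfl fun i _ => (hx2star i).symm]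
end
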